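/- arXiv:1611.08228 — 3 statements merged into one kernel-verified Lean document; each statement's English description precedes it below -/
import Mathlib

section
/- The map φ from the 3-dimensional Heisenberg group H₃(ℝ) to GL(4,ℝ) sending the matrix [[1,a,c],[0,1,b],[0,0,1]] to [[1,a,a²/2+b,a³/6+ab−c],[0,1,a,a²/2],[0,0,1,a],[0,0,0,1]] is a group homomorphism. -/
/-- A matrix in the Heisenberg group `H₃(ℝ)`. -/
def Heis (a b c : ℝ) : Matrix (Fin 3) (Fin 3) ℝ :=
  !![1, a, c; 0, 1, b; 0, 0, 1]

/-- The map `φ`. -/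
noncomputable def phiMat (a b c : ℝ) : Matrix (Fin 4) (Fin 4) ℝ :=
  !![1, a, a ^ 2 / 2 + b, a ^ 3 / 6 + a * b - c;
     0, 1, a, a ^ 2 / 2;
     0, 0, 1, a;
     0, 0, 0, 1]

/-- `φ : H₃(ℝ) → GL(4,ℝ)` is a group homomorphism: each `φ(g)` is invertible, `φ` sends
the identity to the identity, and `φ` sends products to products. -/
theorem phi_is_group_hom :
    (∀ a b c : ℝ, IsUnit (phiMat a b c)) ∧
    phiMat 0 0 0 = 1 ∧
    (∀ a b c a' b' c' a'' b'' c'' : ℝ,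
      Heis a b c * Heis a' b' c' = Heis a'' b'' c'' →
        phiMat a b c * phiMat a' b' c' = phiMat a'' b'' c'') := by
  refine ⟨fun a b c => ?_, ?_, fun a b c a' b' c' a'' b'' c'' h => ?_⟩
  · rw [Matrix.isUnit_iff_isUnit_det]
    have : (phiMat a b c).det = 1 := by
      simp [phiMat, Matrix.det_succ_row_zero, Fin.sum_univ_succ]
    rw [this]; exact isUnit_one
  · ext i j
    fin_cases i <;> fin_cases j <;> simp [phiMat, Matrix.one_apply, Matrix.vecHead, Matrix.vecTail]
  · have h01 := congrFun (congrFun h 0) 1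
    have h12 := congrFun (congrFun h 1) 2
    have h02 := congrFun (congrFun h 0) 2
    simp [Heis, Matrix.mul_apply, Fin.sum_univ_succ] at h01 h12 h02
    subst h01 h12
    ext i j
    fin_cases i <;> fin_cases j <;>
      simp [phiMat, Matrix.mul_apply, Fin.sum_univ_succ, Matrix.vecHead, Matrix.vecTail] <;>
      ring_nf <;> linarith [h02]
end

section
/- The image of φ(H₃(ℝ)) is a normal subgroup of H. -/
def Hmat (A B C D : ℝ) : Matrix (Fin 4) (Fin 4) ℝ :=
  !![1, A, B, D; 0, 1, A, C; 0, 0, 1, A; 0, 0, 0, 1]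

lemma phi_mul (a b c a' b' c' : ℝ) :
    phiMat a b c * phiMat a' b' c' = phiMat (a + a') (b + b') (c + c' + a * b') := by
  ext i j
  fin_cases i <;> fin_cases j <;>
    simp [phiMat, Matrix.mul_apply, Fin.sum_univ_succ, Matrix.vecHead, Matrix.vecTail] <;> ring

lemma phi_inv (a b c : ℝ) : (phiMat a b c)⁻¹ = phiMat (-a) (-b) (a * b - c) := by
  apply Matrix.inv_eq_right_inv
  rw [phi_mul]
  ext i j
  fin_cases i <;> fin_cases j <;> simp [phiMat, Matrix.vecHead, Matrix.vecTail] <;> ring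

lemma Hmat_inv (A B C D : ℝ) :
    (Hmat A B C D)⁻¹ = Hmat (-A) (A ^ 2 - B) (A ^ 2 - C) (B * A - D - A * (A ^ 2 - C)) := by
  apply Matrix.inv_eq_right_inv
  ext i j
  fin_cases i <;> fin_cases j <;>
    simp [Hmat, Matrix.mul_apply, Fin.sum_univ_succ, Matrix.vecHead, Matrix.vecTail] <;> ring

set_option maxHeartbeats 1000000 in
/-- The image of `φ` is a normal subgroup of `H`: it contains the identity, is closed under
products and inverses, and is closed under conjugation by arbitrary elements of `H`. -/
theorem phi_image_normal_in_H :
    (∃ a b c : ℝ, phiMat a b c = 1) ∧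
    (∀ a b c a' b' c' : ℝ, ∃ a'' b'' c'' : ℝ,
      phiMat a b c * phiMat a' b' c' = phiMat a'' b'' c'') ∧
    (∀ a b c : ℝ, ∃ a' b' c' : ℝ, (phiMat a b c)⁻¹ = phiMat a' b' c') ∧
    (∀ A B C D a b c : ℝ, ∃ a' b' c' : ℝ,
      Hmat A B C D * phiMat a b c * (Hmat A B C D)⁻¹ = phiMat a' b' c') := by
  refine ⟨⟨0, 0, 0, ?_⟩, fun a b c a' b' c' => ⟨a + a', b + b', c + c' + a * b', phi_mul ..⟩,
    fun a b c => ⟨-a, -b, a * b - c, phi_inv ..⟩,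
    fun A B C D a b c => ⟨a, b, c + (C - B) * a + A * b, ?_⟩⟩
  · ext i j
    fin_cases i <;> fin_cases j <;> simp [phiMat, Matrix.one_apply, Matrix.vecHead, Matrix.vecTail]
  · rw [Hmat_inv]
    ext i j
    fin_cases i <;> fin_cases j <;>
      simp [phiMat, Hmat, Matrix.mul_apply, Fin.sum_univ_succ, Matrix.vecHead, Matrix.vecTail] <;> ring
end

section
/- For the framing V₀=∂₀, V₁=∂₁−A∂₀, V₂=∂₂−A∂₁−(B−A²)∂₀, V₃=∂₃−A∂₂−(C−A²)∂₁−(D−(C+B)A+A³)∂₀ on ℝ⁴, where A,B,C,D are smooth functions, the commutator structure functions c_{ij}^k defined by [V_i,V_j]=Σ_k c_{ij}^k V_k satisfy: the four equations c⁰₂₃=0, c¹₂₃−2c⁰₁₃=0, c²₂₃−2c¹₁₃+c⁰₀₃+3c⁰₁₂=0, c³₂₃−2c²₁₃+c¹₀₃+3c¹₁₂−2c⁰₀₂=0 are equivalent to the first-order PDE system: V₂(D)−V₃(B)−AV₂(B)−CV₂(A)+AV₃(A)+A²V₂(A)=0; 2V₁(D)−V₂(C)−2AV₁(B)−V₃(A)+AV₂(A)+2A²V₁(A)−2CV₁(A)=0;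 V₀(D)−2V₁(C)+3V₁(B)−AV₀(B)−2V₂(A)−AV₁(A)−CV₀(A)+A²V₀(A)=0; V₀(C)−2V₀(B)+V₁(A)+AV₀(A)=0. -/
/-- Points of `ℝ⁴`. -/
abbrev Pt : Type := Fin 4 → ℝ

/-- The framing `V₀ = ∂₀`, `V₁ = ∂₁ − A∂₀`, `V₂ = ∂₂ − A∂₁ − (B−A²)∂₀`,
`V₃ = ∂₃ − A∂₂ − (C−A²)∂₁ − (D−(C+B)A+A³)∂₀`, written as vector fields on `ℝ⁴`
(component `k` of `Vframe A B C D i x` is the coefficient of `∂ₖ` in `Vᵢ` at `x`). -/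
noncomputable def Vframe (A B C D : Pt → ℝ) (i : Fin 4) (x : Pt) : Pt :=
  ![![1, 0, 0, 0],
    ![-A x, 1, 0, 0],
    ![-(B x - (A x) ^ 2), -A x, 1, 0],
    ![-(D x - (C x + B x) * A x + (A x) ^ 3), -(C x - (A x) ^ 2), -A x, 1]] i

/-- The derivative of a function `f` along a vector field `v`. -/
noncomputable def Dop (v : Pt → Pt) (f : Pt → ℝ) (x : Pt) : ℝ := fderiv ℝ f x (v x)

/-- The Lie bracket of vector fields on `ℝ⁴`. -/
noncomputable def bracket (v w : Pt → Pt) (x : Pt) : Pt :=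
  fderiv ℝ w x (v x) - fderiv ℝ v x (w x)

lemma bracket_comp (v w : Pt → Pt) (x : Pt) (m : Fin 4)
    (hv : ∀ n, DifferentiableAt ℝ (fun y => v y n) x)
    (hw : ∀ n, DifferentiableAt ℝ (fun y => w y n) x) :
    bracket v w x m
      = fderiv ℝ (fun y => w y m) x (v x) - fderiv ℝ (fun y => v y m) x (w x) := by
  have h1 : fderiv ℝ w x = ContinuousLinearMap.pi fun n => fderiv ℝ (fun y => w y n) x :=
    fderiv_pi hw
  have h2 : fderiv ℝ v x = ContinuousLinearMap.pi fun n => fderiv ℝ (fun y => v y n) x :=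
    fderiv_pi hv
  simp [bracket, h1, h2]

lemma Vframe_comp_diff {A B C D : Pt → ℝ} (hA : Differentiable ℝ A) (hB : Differentiable ℝ B)
    (hC : Differentiable ℝ C) (hD : Differentiable ℝ D) (i : Fin 4) (x : Pt) :
    ∀ n, DifferentiableAt ℝ (fun y => Vframe A B C D i y n) x := by
  intro n
  fin_cases i <;> fin_cases n <;> simp [Vframe] <;> fun_prop

section dirs
variable (A B C D : Pt → ℝ) (x : Pt)

lemma dV_negA (hA : DifferentiableAt ℝ A x) :
    ∀ u, fderiv ℝ (fun y => -A y) x u = -(fderiv ℝ A x u) := by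
  intro u; rw [fderiv_fun_neg]; simp

lemma dV_quad (hA : DifferentiableAt ℝ A x) (hB : DifferentiableAt ℝ B x) :
    ∀ u, fderiv ℝ (fun y => -(B y - A y ^ 2)) x u
      = -(fderiv ℝ B x u - 2 * A x * fderiv ℝ A x u) := by
  intro u
  have e : (fun y => -(B y - A y ^ 2)) = (fun y => -((B y - A y * A y))) := by
    funext y; ring
  rw [e, ((hB.hasFDerivAt.fun_sub (hA.hasFDerivAt.fun_mul hA.hasFDerivAt)).fun_neg).fderiv]
  simp [smul_eq_mul]; ring

lemma dV_cubic (hA : DifferentiableAt ℝ A x) (hB : DifferentiableAt ℝ B x)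
    (hC : DifferentiableAt ℝ C x) (hD : DifferentiableAt ℝ D x) :
    ∀ u, fderiv ℝ (fun y => -(D y - (C y + B y) * A y + A y ^ 3)) x u
      = -(fderiv ℝ D x u - (C x + B x) * fderiv ℝ A x u
          - (fderiv ℝ C x u + fderiv ℝ B x u) * A x + 3 * A x ^ 2 * fderiv ℝ A x u) := by
  intro u
  have e : (fun y => -(D y - (C y + B y) * A y + A y ^ 3))
      = (fun y => -(D y - (C y + B y) * A y + A y * (A y * A y))) := by
    funext y; ring
  rw [e, (((hD.hasFDerivAt.fun_sub ((hC.hasFDerivAt.fun_add hB.hasFDerivAt).fun_mul hA.hasFDerivAt)).fun_add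
      (hA.hasFDerivAt.fun_mul (hA.hasFDerivAt.fun_mul hA.hasFDerivAt))).fun_neg).fderiv]
  simp [smul_eq_mul]; ring

end dirs

lemma key_lemma (A B C D : Pt → ℝ)
    (hA : ContDiff ℝ (⊤ : ℕ∞) A) (hB : ContDiff ℝ (⊤ : ℕ∞) B) (hC : ContDiff ℝ (⊤ : ℕ∞) C)
    (hD : ContDiff ℝ (⊤ : ℕ∞) D)
    (c : Fin 4 → Fin 4 → Fin 4 → Pt → ℝ)
    (hc : ∀ i j x, bracket (Vframe A B C D i) (Vframe A B C D j) x =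
      ∑ k, c i j k x • Vframe A B C D k x) (x : Pt) :
    c 2 3 0 x
      = -(fderiv ℝ D x (Vframe A B C D 2 x) - fderiv ℝ B x (Vframe A B C D 3 x)
          - A x * fderiv ℝ B x (Vframe A B C D 2 x) - C x * fderiv ℝ A x (Vframe A B C D 2 x)
          + A x * fderiv ℝ A x (Vframe A B C D 3 x)
          + (A x) ^ 2 * fderiv ℝ A x (Vframe A B C D 2 x)) ∧
    c 2 3 1 x - 2 * c 1 3 0 x
      = (2 * fderiv ℝ D x (Vframe A B C D 1 x) - fderiv ℝ C x (Vframe A B C D 2 x)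
          - 2 * A x * fderiv ℝ B x (Vframe A B C D 1 x) - fderiv ℝ A x (Vframe A B C D 3 x)
          + A x * fderiv ℝ A x (Vframe A B C D 2 x)
          + 2 * (A x) ^ 2 * fderiv ℝ A x (Vframe A B C D 1 x)
          - 2 * C x * fderiv ℝ A x (Vframe A B C D 1 x)) ∧
    c 2 3 2 x - 2 * c 1 3 1 x + c 0 3 0 x + 3 * c 1 2 0 x
      = -(fderiv ℝ D x (Vframe A B C D 0 x) - 2 * fderiv ℝ C x (Vframe A B C D 1 x)
          + 3 * fderiv ℝ B x (Vframe A B C D 1 x) - A x * fderiv ℝ B x (Vframe A B C D 0 x)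
          - 2 * fderiv ℝ A x (Vframe A B C D 2 x) - A x * fderiv ℝ A x (Vframe A B C D 1 x)
          - C x * fderiv ℝ A x (Vframe A B C D 0 x)
          + (A x) ^ 2 * fderiv ℝ A x (Vframe A B C D 0 x)) ∧
    c 2 3 3 x - 2 * c 1 3 2 x + c 0 3 1 x + 3 * c 1 2 1 x - 2 * c 0 2 0 x
      = -(fderiv ℝ C x (Vframe A B C D 0 x) - 2 * fderiv ℝ B x (Vframe A B C D 0 x)
          + fderiv ℝ A x (Vframe A B C D 1 x) + A x * fderiv ℝ A x (Vframe A B C D 0 x)) := by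
  have hA' : Differentiable ℝ A := hA.differentiable (by simp)
  have hB' : Differentiable ℝ B := hB.differentiable (by simp)
  have hC' : Differentiable ℝ C := hC.differentiable (by simp)
  have hD' : Differentiable ℝ D := hD.differentiable (by simp)
  have hAx := hA' x; have hBx := hB' x; have hCx := hC' x; have hDx := hD' x
  have comp : ∀ i j (m : Fin 4),
      fderiv ℝ (fun y => Vframe A B C D j y m) x (Vframe A B C D i x)
        - fderiv ℝ (fun y => Vframe A B C D i y m) x (Vframe A B C D j x)
      = ∑ k, c i j k x * Vframe A B C D k x m := by
    intro i j m
    have h := congrFun (hc i j x) m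
    rw [bracket_comp _ _ _ _ (Vframe_comp_diff hA' hB' hC' hD' i x)
      (Vframe_comp_diff hA' hB' hC' hD' j x)] at h
    simpa [smul_eq_mul] using h
  -- lambda rewrites
  have r00 : (fun y => Vframe A B C D 0 y 0) = fun _ => (1:ℝ) := by funext y; simp [Vframe]
  have r01 : (fun y => Vframe A B C D 0 y 1) = fun _ => (0:ℝ) := by funext y; simp [Vframe]
  have r02 : (fun y => Vframe A B C D 0 y 2) = fun _ => (0:ℝ) := by funext y; simp [Vframe]
  have r03 : (fun y => Vframe A B C D 0 y 3) = fun _ => (0:ℝ) := by funext y; simp [Vframe]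
  have r10 : (fun y => Vframe A B C D 1 y 0) = fun y => -A y := by funext y; simp [Vframe]
  have r11 : (fun y => Vframe A B C D 1 y 1) = fun _ => (1:ℝ) := by funext y; simp [Vframe]
  have r12 : (fun y => Vframe A B C D 1 y 2) = fun _ => (0:ℝ) := by funext y; simp [Vframe]
  have r13 : (fun y => Vframe A B C D 1 y 3) = fun _ => (0:ℝ) := by funext y; simp [Vframe]
  have r20 : (fun y => Vframe A B C D 2 y 0) = fun y => -(B y - A y ^ 2) := by
    funext y; simp [Vframe]
  have r21 : (fun y => Vframe A B C D 2 y 1) = fun y => -A y := by funext y; simp [Vframe]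
  have r22 : (fun y => Vframe A B C D 2 y 2) = fun _ => (1:ℝ) := by funext y; simp [Vframe]
  have r23 : (fun y => Vframe A B C D 2 y 3) = fun _ => (0:ℝ) := by funext y; simp [Vframe]
  have r30 : (fun y => Vframe A B C D 3 y 0)
      = fun y => -(D y - (C y + B y) * A y + A y ^ 3) := by funext y; simp [Vframe]
  have r31 : (fun y => Vframe A B C D 3 y 1) = fun y => -(C y - A y ^ 2) := by
    funext y; simp [Vframe]
  have r32 : (fun y => Vframe A B C D 3 y 2) = fun y => -A y := by funext y; simp [Vframe]
  have r33 : (fun y => Vframe A B C D 3 y 3) = fun _ => (1:ℝ) := by funext y; simp [Vframe]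
  -- frame values at x
  have hv00 : Vframe A B C D 0 x 0 = 1 := by simp [Vframe]
  have hv01 : Vframe A B C D 0 x 1 = 0 := by simp [Vframe]
  have hv02 : Vframe A B C D 0 x 2 = 0 := by simp [Vframe]
  have hv03 : Vframe A B C D 0 x 3 = 0 := by simp [Vframe]
  have hv10 : Vframe A B C D 1 x 0 = -A x := by simp [Vframe]
  have hv11 : Vframe A B C D 1 x 1 = 1 := by simp [Vframe]
  have hv12 : Vframe A B C D 1 x 2 = 0 := by simp [Vframe]
  have hv13 : Vframe A B C D 1 x 3 = 0 := by simp [Vframe]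
  have hv20 : Vframe A B C D 2 x 0 = -(B x - (A x) ^ 2) := by simp [Vframe]
  have hv21 : Vframe A B C D 2 x 1 = -A x := by simp [Vframe]
  have hv22 : Vframe A B C D 2 x 2 = 1 := by simp [Vframe]
  have hv23 : Vframe A B C D 2 x 3 = 0 := by simp [Vframe]
  have hv30 : Vframe A B C D 3 x 0 = -(D x - (C x + B x) * A x + (A x) ^ 3) := by
    simp [Vframe]
  have hv31 : Vframe A B C D 3 x 1 = -(C x - (A x) ^ 2) := by simp [Vframe]
  have hv32 : Vframe A B C D 3 x 2 = -A x := by simp [Vframe]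
  have hv33 : Vframe A B C D 3 x 3 = 1 := by simp [Vframe]
  have E230 := comp 2 3 0; have E231 := comp 2 3 1
  have E232 := comp 2 3 2; have E233 := comp 2 3 3
  have E130 := comp 1 3 0; have E131 := comp 1 3 1
  have E132 := comp 1 3 2; have E133 := comp 1 3 3
  have E030 := comp 0 3 0; have E031 := comp 0 3 1
  have E032 := comp 0 3 2; have E033 := comp 0 3 3
  have E120 := comp 1 2 0; have E121 := comp 1 2 1
  have E122 := comp 1 2 2; have E123 := comp 1 2 3
  have E020 := comp 0 2 0; have E021 := comp 0 2 1
  have E022 := comp 0 2 2; have E023 := comp 0 2 3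
  simp only [r00, r01, r02, r03, r10, r11, r12, r13, r20, r21, r22, r23, r30, r31, r32, r33,
    dV_negA A x hAx, dV_quad A B x hAx hBx, dV_quad A C x hAx hCx,
    dV_cubic A B C D x hAx hBx hCx hDx, fderiv_fun_const, Pi.zero_apply,
    ContinuousLinearMap.zero_apply, Fin.sum_univ_four,
    hv00, hv01, hv02, hv03, hv10, hv11, hv12, hv13, hv20, hv21, hv22, hv23,
    hv30, hv31, hv32, hv33, mul_one, mul_zero, add_zero, zero_add, sub_zero, zero_sub,
    mul_neg, neg_neg]
    at E230 E231 E232 E233 E130 E131 E132 E133 E030 E031 E032 E033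
       E120 E121 E122 E123 E020 E021 E022 E023
  refine ⟨?_, ?_, ?_, ?_⟩
  · linear_combination (-1 : ℝ) * E230 - A x * E231 - B x * E232 - D x * E233
  · linear_combination (-1 : ℝ) * (E231 + A x * E232 + C x * E233)
      + 2 * (E130 + A x * E131 + B x * E132 + D x * E133)
  · linear_combination (-1 : ℝ) * ((E232 + A x * E233)
      - 2 * (E131 + A x * E132 + C x * E133)
      + (E030 + A x * E031 + B x * E032 + D x * E033)
      + 3 * (E120 + A x * E121 + B x * E122 + D x * E123))
  · linear_combination (-1 : ℝ) * (E233 - 2 * (E132 + A x * E133)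
      + (E031 + A x * E032 + C x * E033)
      + 3 * (E121 + A x * E122 + C x * E123)
      - 2 * (E020 + A x * E021 + B x * E022 + D x * E023))

/-- For the framing `V₀,…,V₃`, with structure functions `c` defined by
`[Vᵢ,Vⱼ] = Σₖ cᵢⱼᵏ Vₖ`, the four equations `c⁰₂₃ = 0`, `c¹₂₃ − 2c⁰₁₃ = 0`,
`c²₂₃ − 2c¹₁₃ + c⁰₀₃ + 3c⁰₁₂ = 0`, `c³₂₃ − 2c²₁₃ + c¹₀₃ + 3c¹₁₂ − 2c⁰₀₂ = 0` hold
everywhere iff the first-order quasi-linear PDE system \eqref{intSystem} holds. -/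
theorem structure_eqs_iff_pde (A B C D : Pt → ℝ)
    (hA : ContDiff ℝ (⊤ : ℕ∞) A) (hB : ContDiff ℝ (⊤ : ℕ∞) B) (hC : ContDiff ℝ (⊤ : ℕ∞) C)
    (hD : ContDiff ℝ (⊤ : ℕ∞) D)
    (c : Fin 4 → Fin 4 → Fin 4 → Pt → ℝ)
    (hc : ∀ i j x, bracket (Vframe A B C D i) (Vframe A B C D j) x =
      ∑ k, c i j k x • Vframe A B C D k x) :
    (∀ x : Pt,
        c 2 3 0 x = 0 ∧
        c 2 3 1 x - 2 * c 1 3 0 x = 0 ∧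
        c 2 3 2 x - 2 * c 1 3 1 x + c 0 3 0 x + 3 * c 1 2 0 x = 0 ∧
        c 2 3 3 x - 2 * c 1 3 2 x + c 0 3 1 x + 3 * c 1 2 1 x - 2 * c 0 2 0 x = 0) ↔
    (∀ x : Pt,
        let V := Vframe A B C D
        Dop (V 2) D x - Dop (V 3) B x - A x * Dop (V 2) B x - C x * Dop (V 2) A x
          + A x * Dop (V 3) A x + (A x) ^ 2 * Dop (V 2) A x = 0 ∧
        2 * Dop (V 1) D x - Dop (V 2) C x - 2 * A x * Dop (V 1) B x - Dop (V 3) A x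
          + A x * Dop (V 2) A x + 2 * (A x) ^ 2 * Dop (V 1) A x
          - 2 * C x * Dop (V 1) A x = 0 ∧
        Dop (V 0) D x - 2 * Dop (V 1) C x + 3 * Dop (V 1) B x - A x * Dop (V 0) B x
          - 2 * Dop (V 2) A x - A x * Dop (V 1) A x - C x * Dop (V 0) A x
          + (A x) ^ 2 * Dop (V 0) A x = 0 ∧
        Dop (V 0) C x - 2 * Dop (V 0) B x + Dop (V 1) A x + A x * Dop (V 0) A x = 0) := by
  constructor
  · intro h x
    obtain ⟨k1, k2, k3, k4⟩ := key_lemma A B C D hA hB hC hD c hc x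
    obtain ⟨h1, h2, h3, h4⟩ := h x
    refine ⟨?_, ?_, ?_, ?_⟩ <;> simp only [Dop] <;> linarith
  · intro h x
    obtain ⟨k1, k2, k3, k4⟩ := key_lemma A B C D hA hB hC hD c hc x
    obtain ⟨h1, h2, h3, h4⟩ := h x
    simp only [Dop] at h1 h2 h3 h4
    refine ⟨?_, ?_, ?_, ?_⟩ <;> linarith
end
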